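/- Let f_v(x) = ∑_{k=1}^K (w^k/‖w‖_2)·‖x^k - x_v^k‖_2 with w ∈ R_+^K, w ≠ 0, and suppose ‖x_v^k - x_t^k‖_2 > r for all k, with r > 0. Then the minimizer of f_v over the Euclidean ball {x : ‖x - x_t‖_2 ≤ r} is x_t + r·u where the k-th block of u is (w^k/‖w‖_2)·(x_v^k - x_t^k)/‖x_v^k - x_t^k‖_2, and moreover ‖u‖_2 = 1. -/

import Mathlib

open Finset

/-!
With `c k = w k / ‖w‖` we have `∑ c k ^ 2 = 1`. For `x` in the ball, the blockwise triangle
inequality and Cauchy–Schwarz give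
`f_v x ≥ ∑ c k * ‖x_v k - x_t k‖ - ∑ c k * ‖x k - x_t k‖ ≥ ∑ c k * ‖x_v k - x_t k‖ - r`.
The point `x_t + r • u` moves block `k` a distance `r * c k ≤ r < ‖x_v k - x_t k‖` straight
towards `x_v k`, so it attains this bound.
-/

lemma EuclideanSpace.sum_sq_div_norm_eq_one {ι : Type*} [Fintype ι]
    {w : EuclideanSpace ℝ ι} (hw : w ≠ 0) : ∑ i, (w i / ‖w‖) ^ 2 = 1 := by
  have hpos : 0 < ‖w‖ := norm_pos_iff.mpr hw
  simp only [div_pow, ← Finset.sum_div, ← EuclideanSpace.real_norm_sq_eq]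
  exact div_self (pow_pos hpos 2).ne'

lemma le_one_of_sum_sq_eq_one {ι : Type*} [Fintype ι] {c : ι → ℝ}
    (hc : ∑ i, c i ^ 2 = 1) (i : ι) : c i ≤ 1 := by
  have : c i ^ 2 ≤ 1 :=
    hc ▸ Finset.single_le_sum (f := fun j => c j ^ 2) (fun j _ => sq_nonneg _) (mem_univ i)
  nlinarith

lemma norm_smul_inv_norm_sub_self {E : Type*} [NormedAddCommGroup E] [NormedSpace ℝ E]
    (d : E) {s : ℝ} (hs₀ : 0 ≤ s) (hs : s ≤ ‖d‖) : ‖(s * ‖d‖⁻¹) • d - d‖ = ‖d‖ - s := by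
  rcases eq_or_ne d 0 with rfl | hd
  · obtain rfl : s = 0 := le_antisymm (by simpa using hs) hs₀
    simp
  have hpos : 0 < ‖d‖ := norm_pos_iff.mpr hd
  have hcoef : s * ‖d‖⁻¹ ≤ 1 := by
    rw [← div_eq_mul_inv]
    exact div_le_one_of_le₀ hs hpos.le
  have hfactor : (s * ‖d‖⁻¹) • d - d = (s * ‖d‖⁻¹ - 1) • d := by rw [sub_smul, one_smul]
  rw [hfactor, norm_smul, Real.norm_of_nonpos (by linarith),
    neg_sub, sub_mul, one_mul, mul_assoc, inv_mul_cancel₀ hpos.ne', mul_one]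

lemma add_smul_mem_closedBall {E : Type*} [SeminormedAddCommGroup E] [NormedSpace ℝ E]
    (t : E) {u : E} (hu : ‖u‖ ≤ 1) {r : ℝ} (hr : 0 ≤ r) : t + r • u ∈ Metric.closedBall t r := by
  rw [Metric.mem_closedBall, dist_eq_norm, add_sub_cancel_left, norm_smul,
    Real.norm_of_nonneg hr]
  exact mul_le_of_le_one_right hr hu

namespace PiLp

variable {ι : Type*} {E : ι → Type*} [∀ i, NormedAddCommGroup (E i)]

lemma sum_mul_norm_le [Fintype ι] {c : ι → ℝ} (hc : ∑ i, c i ^ 2 = 1) (x : PiLp 2 E) :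
    ∑ i, c i * ‖x i‖ ≤ ‖x‖ := by
  calc ∑ i, c i * ‖x i‖ ≤ √(∑ i, c i ^ 2) * √(∑ i, ‖x i‖ ^ 2) :=
        Real.sum_mul_le_sqrt_mul_sqrt _ _ _
    _ = ‖x‖ := by rw [hc, Real.sqrt_one, one_mul, norm_eq_of_L2]

lemma norm_eq_one_of_norm_apply [Fintype ι] {c : ι → ℝ} (hc : ∑ i, c i ^ 2 = 1) {x : PiLp 2 E}
    (hx : ∀ i, ‖x i‖ = c i) : ‖x‖ = 1 := by
  have hsq : ‖x‖ ^ 2 = 1 := by simp only [norm_sq_eq_of_L2, hx, hc]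
  nlinarith [norm_nonneg x]

lemma sum_mul_norm_sub_le [Fintype ι] {c : ι → ℝ} (hc : ∀ i, 0 ≤ c i)
    (hc₁ : ∑ i, c i ^ 2 = 1) (v t x : PiLp 2 E) :
    ∑ i, c i * ‖v i - t i‖ ≤ ∑ i, c i * ‖x i - v i‖ + ‖x - t‖ := by
  rw [← sub_le_iff_le_add]
  have htri : ∀ i, ‖v i - t i‖ - ‖x i - t i‖ ≤ ‖x i - v i‖ := fun i => by
    linarith [norm_sub_le_norm_sub_add_norm_sub (v i) (x i) (t i), norm_sub_rev (v i) (x i)]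
  calc ∑ i, c i * ‖v i - t i‖ - ‖x - t‖
      ≤ ∑ i, c i * ‖v i - t i‖ - ∑ i, c i * ‖x i - t i‖ :=
        sub_le_sub_left (sum_mul_norm_le hc₁ (x - t)) _
    _ = ∑ i, c i * (‖v i - t i‖ - ‖x i - t i‖) := by
        rw [← sum_sub_distrib]; simp only [mul_sub]
    _ ≤ ∑ i, c i * ‖x i - v i‖ :=
        sum_le_sum fun i _ => mul_le_mul_of_nonneg_left (htri i) (hc i)

variable [∀ i, NormedSpace ℝ (E i)]

/-- The paper's direction `u`, with weights `c k = w k / ‖w‖`. -/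
noncomputable def weightedDirection (c : ι → ℝ) (v t : PiLp 2 E) : PiLp 2 E :=
  (WithLp.equiv 2 _).symm fun i => (c i * ‖v i - t i‖⁻¹) • (v i - t i)

variable {c : ι → ℝ} {v t : PiLp 2 E}

lemma norm_weightedDirection_apply (hc : ∀ i, 0 ≤ c i) (hvt : ∀ i, v i ≠ t i) (i : ι) :
    ‖weightedDirection c v t i‖ = c i := by
  have hpos : 0 < ‖v i - t i‖ := norm_pos_iff.mpr (sub_ne_zero.mpr (hvt i))
  simp only [weightedDirection, WithLp.equiv_symm_apply, PiLp.toLp_apply, norm_smul,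
    Real.norm_eq_abs, abs_mul, abs_of_nonneg (hc i), abs_inv, abs_norm]
  rw [mul_assoc, inv_mul_cancel₀ hpos.ne', mul_one]

lemma norm_weightedDirection [Fintype ι] (hc : ∀ i, 0 ≤ c i) (hc₁ : ∑ i, c i ^ 2 = 1)
    (hvt : ∀ i, v i ≠ t i) : ‖weightedDirection c v t‖ = 1 :=
  norm_eq_one_of_norm_apply hc₁ (norm_weightedDirection_apply hc hvt)

lemma sum_mul_norm_add_weightedDirection_sub [Fintype ι] {r : ℝ} (hr : 0 ≤ r) (hc : ∀ i, 0 ≤ c i)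
    (hc₁ : ∑ i, c i ^ 2 = 1) (hvt : ∀ i, r ≤ ‖v i - t i‖) :
    ∑ i, c i * ‖(t + r • weightedDirection c v t) i - v i‖
      = ∑ i, c i * ‖v i - t i‖ - r := by
  have hblock : ∀ i, ‖(t + r • weightedDirection c v t) i - v i‖ = ‖v i - t i‖ - r * c i := by
    intro i
    have hshift : (t + r • weightedDirection c v t) i - v i
        = ((r * c i) * ‖v i - t i‖⁻¹) • (v i - t i) - (v i - t i) := by
      simp only [weightedDirection, PiLp.add_apply, PiLp.smul_apply, WithLp.equiv_symm_apply,
        smul_smul, mul_assoc]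
      abel
    rw [hshift, norm_smul_inv_norm_sub_self _ (mul_nonneg hr (hc i))]
    nlinarith [le_one_of_sum_sq_eq_one hc₁ i, hvt i, hc i]
  have hquad : ∑ i, c i * (r * c i) = r := by
    simp only [mul_left_comm (c _) r, ← mul_sum, ← sq, hc₁, mul_one]
  simp only [hblock, mul_sub, sum_sub_distrib, hquad]

theorem isMinOn_add_weightedDirection [Fintype ι] {r : ℝ} (hr : 0 ≤ r) (hc : ∀ i, 0 ≤ c i)
    (hc₁ : ∑ i, c i ^ 2 = 1) (hvt : ∀ i, r ≤ ‖v i - t i‖) :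
    IsMinOn (fun x : PiLp 2 E => ∑ i, c i * ‖x i - v i‖) (Metric.closedBall t r)
      (t + r • weightedDirection c v t) := by
  refine isMinOn_iff.mpr fun x hx => ?_
  rw [Metric.mem_closedBall, dist_eq_norm] at hx
  rw [sum_mul_norm_add_weightedDirection_sub hr hc hc₁ hvt]
  linarith [sum_mul_norm_sub_le hc hc₁ v t x]

end PiLp

/-- for f_v(x) = ∑_k (w^k/‖w‖₂)·‖x^k - x_v^k‖₂ with all blocks of x_v at
distance more than r from those of x_t, the point x_t + r·u, where block k of u is
(w^k/‖w‖₂)·(x_v^k - x_t^k)/‖x_v^k - x_t^k‖₂, minimizes f_v over the Euclidean ball of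
radius r at x_t; moreover ‖u‖₂ = 1. -/
theorem stmt13 {K : ℕ} (n : Fin K → ℕ)
    (w : EuclideanSpace ℝ (Fin K)) (hw : ∀ k, 0 ≤ w k) (hw0 : w ≠ 0)
    (x_v x_t : PiLp 2 (fun k : Fin K => EuclideanSpace ℝ (Fin (n k))))
    (r : ℝ) (hr : 0 < r) (hfar : ∀ k, r < ‖x_v k - x_t k‖) :
    ‖((WithLp.equiv 2 _).symm
        (fun k => ((w k / ‖w‖) * ‖x_v k - x_t k‖⁻¹) • (x_v k - x_t k)) :
        PiLp 2 (fun k : Fin K => EuclideanSpace ℝ (Fin (n k))))‖ = 1 ∧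
    (x_t + r • (WithLp.equiv 2 _).symm
        (fun k => ((w k / ‖w‖) * ‖x_v k - x_t k‖⁻¹) • (x_v k - x_t k))
      ∈ Metric.closedBall x_t r) ∧
    (∀ x ∈ Metric.closedBall x_t r,
      ∑ k, (w k / ‖w‖) *
          ‖(x_t + r • (WithLp.equiv 2 _).symm
              (fun k => ((w k / ‖w‖) * ‖x_v k - x_t k‖⁻¹) • (x_v k - x_t k))) k - x_v k‖
        ≤ ∑ k, (w k / ‖w‖) * ‖x k - x_v k‖) := by
  have hc : ∀ k, 0 ≤ w k / ‖w‖ := fun k => div_nonneg (hw k) (norm_nonneg w)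
  have hc₁ := EuclideanSpace.sum_sq_div_norm_eq_one hw0
  have hvt : ∀ k, x_v k ≠ x_t k := fun k =>
    sub_ne_zero.mp (norm_pos_iff.mp (hr.trans (hfar k)))
  have hu : ‖PiLp.weightedDirection (fun k => w k / ‖w‖) x_v x_t‖ = 1 :=
    PiLp.norm_weightedDirection hc hc₁ hvt
  exact ⟨hu, add_smul_mem_closedBall x_t hu.le hr.le,
    isMinOn_iff.mp (PiLp.isMinOn_add_weightedDirection hr.le hc hc₁ fun k => (hfar k).le)⟩
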